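/- Let (g, ω) be a symplectic Novikov Lie algebra and define the connection ∇^ω_x y = (1/3)(ad_x y - ad_x* y), where ad_x* is the ω-adjoint of ad_x. Then its curvature K(x,y) = [∇^ω_x, ∇^ω_y] - ∇^ω_{[x,y]} satisfies K(x,y) = -(2/9) ad_{[x,y]}. In particular K ≡ 0 if and only if g is two-step nilpotent. -/

import Mathlib

/-!
The ω-adjoint of `ad_x` is `-L_x`, so `∇_x = (1/3)(ad_x + L_x)`, and closedness of `ω` makes
the bracket the commutator of the left-symmetric product. For a Novikov product this gives
`x·[y,z] = y·[x,z] - z·[x,y]`, so `F(a,b,c) = ω(x·[a,b], c)`, which is antisymmetric in `a, b`,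
also satisfies `F(a,b,c) + F(a,c,b) = F(b,c,a)`; together these force `2F = 0`. Hence `L` kills
brackets and `L_{[x,y]} = ad_{[x,y]}`, and expanding the curvature the products cancel by right
commutativity, leaving `(4/9 - 2/3) ad_{[x,y]}`.
-/

/-- The symplectic connection `∇^ω_x = (1/3)(ad_x - ad_x*)` of a symplectic Lie
algebra, where `adstar x` is the symplectic adjoint of `ad_x`. -/
noncomputable def snlaConn {g : Type*} [LieRing g] [LieAlgebra ℝ g]
    (adstar : g → Module.End ℝ g) (x : g) : Module.End ℝ g :=
  (3⁻¹ : ℝ) • (LieAlgebra.ad ℝ g x - adstar x)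

/-- The curvature `K(x,y) = [∇_x, ∇_y] - ∇_{[x,y]}` of the symplectic connection. -/
noncomputable def snlaCurv {g : Type*} [LieRing g] [LieAlgebra ℝ g]
    (adstar : g → Module.End ℝ g) (x y : g) : Module.End ℝ g :=
  snlaConn adstar x * snlaConn adstar y - snlaConn adstar y * snlaConn adstar x
    - snlaConn adstar ⁅x, y⁆

theorem LinearMap.SeparatingLeft.eq_of_forall_apply_eq {R M N : Type*} [CommRing R]
    [AddCommGroup M] [Module R M] [AddCommGroup N] [Module R N] {B : M →ₗ[R] N →ₗ[R] R}
    (hB : B.SeparatingLeft) {a b : M} (h : ∀ w, B a w = B b w) : a = b :=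
  sub_eq_zero.mp <| hB _ fun w => by rw [map_sub, LinearMap.sub_apply, h, sub_self]

namespace SymplecticNovikov

section

variable {R L : Type*} [CommRing R] [LieRing L] [LieAlgebra R L]
  {ω : L →ₗ[R] L →ₗ[R] R} {mul : L →ₗ[R] L →ₗ[R] L}

theorem adstar_eq_neg_mul (hskew : ∀ x y, ω x y = -ω y x) (hnondeg : ω.SeparatingLeft)
    (hdef : ∀ x y z, ω (mul x y) z = -ω y ⁅x, z⁆) {adstar : L → Module.End R L}
    (hadj : ∀ x y z, ω ⁅x, y⁆ z = ω y (adstar x z)) (x z : L) :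
    adstar x z = -mul x z := by
  refine hnondeg.eq_of_forall_apply_eq fun w => ?_
  rw [map_neg, LinearMap.neg_apply, hskew, ← hadj, hskew, ← hdef]

theorem lie_eq_mul_sub_mul (hskew : ∀ x y, ω x y = -ω y x) (hnondeg : ω.SeparatingLeft)
    (hcocycle : ∀ x y z, ω ⁅x, y⁆ z + ω ⁅y, z⁆ x + ω ⁅z, x⁆ y = 0)
    (hdef : ∀ x y z, ω (mul x y) z = -ω y ⁅x, z⁆) (x y : L) :
    ⁅x, y⁆ = mul x y - mul y x := by
  refine hnondeg.eq_of_forall_apply_eq fun w => ?_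
  have hwx : ω ⁅w, x⁆ y = -ω ⁅x, w⁆ y := by rw [← lie_skew, map_neg, LinearMap.neg_apply]
  rw [map_sub, LinearMap.sub_apply, hdef, hdef]
  linear_combination hcocycle x y w - hwx + hskew ⁅x, w⁆ y - hskew ⁅y, w⁆ x

theorem mul_lie_left (hnondeg : ω.SeparatingLeft)
    (hdef : ∀ x y z, ω (mul x y) z = -ω y ⁅x, z⁆) (x y z : L) :
    mul ⁅x, y⁆ z = mul x (mul y z) - mul y (mul x z) := by
  refine hnondeg.eq_of_forall_apply_eq fun w => ?_
  simp only [map_sub, LinearMap.sub_apply, hdef, lie_lie]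
  ring

theorem mul_lie_right (hcomm : ∀ x y : L, ⁅x, y⁆ = mul x y - mul y x)
    (hrep : ∀ x y z : L, mul ⁅x, y⁆ z = mul x (mul y z) - mul y (mul x z))
    (hNov : ∀ x y z : L, mul (mul x y) z = mul (mul x z) y) (x y z : L) :
    mul x ⁅y, z⁆ = mul y ⁅x, z⁆ - mul z ⁅x, y⁆ := by
  have hrep' : ∀ a b c : L,
      mul a (mul b c) = mul b (mul a c) + (mul (mul a b) c - mul (mul b a) c) :=
    fun a b c => by rw [← LinearMap.sub_apply, ← map_sub, ← hcomm, hrep]; abel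
  simp only [hcomm, map_sub, hrep' x y z, hrep' x z y, hrep' y z x, hNov x y z, hNov y x z,
    hNov z x y]
  abel

theorem mul_lie_right_eq_zero [NoZeroDivisors R] [NeZero (2 : R)]
    (hskew : ∀ x y, ω x y = -ω y x) (hnondeg : ω.SeparatingLeft)
    (hdef : ∀ x y z, ω (mul x y) z = -ω y ⁅x, z⁆)
    (hright : ∀ x y z : L, mul x ⁅y, z⁆ = mul y ⁅x, z⁆ - mul z ⁅x, y⁆) (x y z : L) :
    mul x ⁅y, z⁆ = 0 := by
  -- both sides equal `-ω([b,c], [a,d])`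
  have hswap : ∀ a b c d : L, ω (mul a ⁅b, c⁆) d = -ω (mul b ⁅a, d⁆) c := fun a b c d => by
    rw [hdef, hdef, hskew]
  have hcyc : ∀ a b c : L,
      ω (mul x ⁅a, b⁆) c + ω (mul x ⁅a, c⁆) b = ω (mul x ⁅b, c⁆) a := fun a b c => by
    rw [hright x a b, map_sub, LinearMap.sub_apply, hswap a x b c, hswap b x a c]
    ring
  have hzero : ∀ a b c : L, ω (mul x ⁅a, b⁆) c = 0 := fun a b c => by
    have hanti : ω (mul x ⁅a, b⁆) c = -ω (mul x ⁅b, a⁆) c := by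
      rw [← lie_skew, map_neg, map_neg, LinearMap.neg_apply]
    have h2 : (2 : R) * ω (mul x ⁅a, b⁆) c = 0 := by
      linear_combination hcyc c b a - hcyc c a b + hanti
    exact (mul_eq_zero.mp h2).resolve_left two_ne_zero
  exact hnondeg _ (hzero y z)

theorem mul_lie_left_eq_lie (hcomm : ∀ x y : L, ⁅x, y⁆ = mul x y - mul y x)
    (hvanish : ∀ x y z : L, mul x ⁅y, z⁆ = 0) (x y z : L) : mul ⁅x, y⁆ z = ⁅⁅x, y⁆, z⁆ := by
  rw [hcomm ⁅x, y⁆ z, hvanish, sub_zero]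

end

section

variable {L : Type*} [LieRing L] [LieAlgebra ℝ L] {mul : L →ₗ[ℝ] L →ₗ[ℝ] L}
  {adstar : L → Module.End ℝ L}

theorem snlaConn_apply (hadstar : ∀ x z, adstar x z = -mul x z) (x z : L) :
    snlaConn adstar x z = (3⁻¹ : ℝ) • (⁅x, z⁆ + mul x z) := by
  simp only [snlaConn, LinearMap.smul_apply, LinearMap.sub_apply, LieAlgebra.ad_apply, hadstar,
    sub_neg_eq_add]

theorem snlaCurv_apply (hadstar : ∀ x z, adstar x z = -mul x z)
    (hcomm : ∀ x y : L, ⁅x, y⁆ = mul x y - mul y x)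
    (hrep : ∀ x y z : L, mul ⁅x, y⁆ z = mul x (mul y z) - mul y (mul x z))
    (hNov : ∀ x y z : L, mul (mul x y) z = mul (mul x z) y)
    (hvanish : ∀ x y z : L, mul x ⁅y, z⁆ = 0) (x y z : L) :
    snlaCurv adstar x y z = (-(2 / 9) : ℝ) • ⁅⁅x, y⁆, z⁆ := by
  have hL := mul_lie_left_eq_lie hcomm hvanish
  have hJ : ⁅y, ⁅x, z⁆⁆ = ⁅x, ⁅y, z⁆⁆ - ⁅⁅x, y⁆, z⁆ := by rw [lie_lie]; abel
  have hxyz : ⁅x, mul y z⁆ = mul x (mul y z) - mul (mul y x) z := by rw [hcomm, hNov]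
  have hyxz : ⁅y, mul x z⁆ = mul y (mul x z) - mul (mul x y) z := by rw [hcomm, hNov]
  have hrep' : mul x (mul y z) = mul y (mul x z) + ⁅⁅x, y⁆, z⁆ := by
    rw [← hL, hrep]; abel
  have hcomm' : mul (mul x y) z = mul (mul y x) z + ⁅⁅x, y⁆, z⁆ := by
    rw [← hL, hcomm x y, map_sub, LinearMap.sub_apply]; abel
  simp only [snlaCurv, LinearMap.sub_apply, Module.End.mul_apply, snlaConn_apply hadstar,
    lie_smul, map_smul, lie_add, map_add, hvanish, hL]
  rw [hJ, hxyz, hyxz, hrep', hcomm']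
  module

end

end SymplecticNovikov

open SymplecticNovikov

theorem snla_stmt_17 (g : Type*) [LieRing g] [LieAlgebra ℝ g]
    (ω : g →ₗ[ℝ] g →ₗ[ℝ] ℝ)
    (hskew : ∀ x y : g, ω x y = - ω y x)
    (hnondeg : ∀ x : g, (∀ y : g, ω x y = 0) → x = 0)
    (hcocycle : ∀ x y z : g, ω ⁅x, y⁆ z + ω ⁅y, z⁆ x + ω ⁅z, x⁆ y = 0)
    (mul : g →ₗ[ℝ] g →ₗ[ℝ] g)
    (hdef : ∀ x y z : g, ω (mul x y) z = - ω y ⁅x, z⁆)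
    (hNov : ∀ x y z : g, mul (mul x y) z = mul (mul x z) y)
    (adstar : g → Module.End ℝ g)
    (hadj : ∀ x y z : g, ω ⁅x, y⁆ z = ω y (adstar x z)) :
    (∀ x y : g, snlaCurv adstar x y = (-(2 / 9) : ℝ) • LieAlgebra.ad ℝ g ⁅x, y⁆) ∧
    ((∀ x y : g, snlaCurv adstar x y = 0) ↔ (∀ x y z : g, ⁅⁅x, y⁆, z⁆ = 0)) := by
  have hcomm := lie_eq_mul_sub_mul hskew hnondeg hcocycle hdef
  have hrep := mul_lie_left hnondeg hdef
  have hvanish := mul_lie_right_eq_zero hskew hnondeg hdef (mul_lie_right hcomm hrep hNov)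
  have hK : ∀ x y : g, snlaCurv adstar x y = (-(2 / 9) : ℝ) • LieAlgebra.ad ℝ g ⁅x, y⁆ :=
    fun x y => LinearMap.ext fun z =>
      snlaCurv_apply (adstar_eq_neg_mul hskew hnondeg hdef hadj) hcomm hrep hNov hvanish x y z
  refine ⟨hK, ?_⟩
  simp only [hK, smul_eq_zero, LinearMap.ext_iff, LinearMap.zero_apply, LieAlgebra.ad_apply]
  norm_num
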